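/- Let K = {k_1 > k_2 > ⋯ > k_r} ⊆ {1,…,n} and let E_{k_i} be elementary factors of a lower triangular matrix A. Then E_{k_1} E_{k_2} ⋯ E_{k_r} = I + ∑_{∅ ≠ J ⊆ K} G(J), where G({j}) = C_j and for |J| ≥ 2 with elements j_1 > ⋯ > j_s, G(J) = a_{j_1,j_2} a_{j_2,j_3} ⋯ a_{j_{s−1},j_s} · C_{j_1} L^{j_1 − j_s}. -/

import Mathlib

/-- The elementary factor `E_k` of `A`. -/
def elemFactor {n : ℕ} (A : Matrix (Fin n) (Fin n) ℂ) (k : Fin n) :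
    Matrix (Fin n) (Fin n) ℂ :=
  Matrix.of fun i j => if j = k then A i j else if i = j then 1 else 0

/-- `C_k = E_k - I`. -/
def Ck {n : ℕ} (A : Matrix (Fin n) (Fin n) ℂ) (k : Fin n) :
    Matrix (Fin n) (Fin n) ℂ :=
  elemFactor A k - 1

/-- The lower shift matrix `L`, with `L_{k+1,k} = 1`. -/
def shiftL (n : ℕ) : Matrix (Fin n) (Fin n) ℂ :=
  Matrix.of fun i j => if (i : ℕ) = (j : ℕ) + 1 then 1 else 0

/-- `G(J)`: for `J = {j₁ > j₂ > ⋯ > jₛ}` nonempty,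
`G(J) = a_{j₁,j₂} ⋯ a_{j_{s-1},j_s} • C_{j₁} L^{j₁ - j_s}` (so `G({j}) = C_j`). -/
noncomputable def GFun {n : ℕ} (A : Matrix (Fin n) (Fin n) ℂ) (J : Finset (Fin n)) :
    Matrix (Fin n) (Fin n) ℂ :=
  match (J.sort (· ≤ ·)).reverse with
  | [] => 0
  | h :: t =>
      (((h :: t).zip t).map fun p => A p.1 p.2).prod •
        (Ck A h *
          shiftL n ^ ((h : ℕ) - (((h :: t).getLast (List.cons_ne_nil _ _)) : ℕ)))

/-!
Each `C_k` vanishes outside column `k`, where it equals column `k` of `A - 1`. Hence for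
`j < k` the product `C_k C_j` only sees row `k` of `C_j`, which is `a_{k,j} e_jᵀ = a_{k,j} e_kᵀ L^{k-j}`,
so `C_k C_j = a_{k,j} C_k L^{k-j}`. Iterating, a decreasing product `C_{j₁} ⋯ C_{jₛ}` telescopes
to `G(J)`, and the theorem follows by expanding `∏ (1 + C_{kᵢ})` over the subsets of `K`,
adding the largest element of `K` at each induction step.
-/

theorem Finset.reverse_sort_le_eq_sort_ge {α : Type*} [LinearOrder α] (s : Finset α) :
    (s.sort (· ≤ ·)).reverse = s.sort (· ≥ ·) :=
  List.Perm.eq_of_pairwise' (List.pairwise_reverse.2 (s.pairwise_sort _)) (s.pairwise_sort _)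
    ((List.reverse_perm _).trans ((s.sort_perm_toList _).trans (s.sort_perm_toList _).symm))

section

variable {n : ℕ} (A : Matrix (Fin n) (Fin n) ℂ)

lemma Ck_apply (k i j : Fin n) :
    Ck A k i j = if j = k then (A - 1) i k else 0 := by
  by_cases hj : j = k
  · subst hj; simp [Ck, elemFactor]
  · by_cases hij : i = j <;> simp [Ck, elemFactor, hj, hij]

lemma shiftL_apply (i j : Fin n) :
    shiftL n i j = if (i : ℕ) = j + 1 then 1 else 0 := rfl

lemma shiftL_pow_apply (m : ℕ) (i l : Fin n) :
    (shiftL n ^ m) i l = if (i : ℕ) = l + m then 1 else 0 := by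
  induction m generalizing i with
  | zero => simp [Matrix.one_apply, Fin.ext_iff]
  | succ m ih =>
    simp only [pow_succ', Matrix.mul_apply, shiftL_apply, ih, ite_mul, one_mul, zero_mul]
    split_ifs with h
    · rw [Finset.sum_eq_single ⟨l + m, by omega⟩] <;> grind
    · exact Finset.sum_eq_zero fun b _ => by grind

lemma Ck_mul_apply (k : Fin n) (M : Matrix (Fin n) (Fin n) ℂ) (i l : Fin n) :
    (Ck A k * M) i l = (A - 1) i k * M k l := by
  simp [Matrix.mul_apply, Ck_apply]

lemma Ck_mul_Ck {j k : Fin n} (h : j < k) :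
    Ck A k * Ck A j = A k j • (Ck A k * shiftL n ^ ((k : ℕ) - j)) := by
  ext i l
  rw [Ck_mul_apply, Matrix.smul_apply, Ck_mul_apply, Ck_apply, shiftL_pow_apply]
  by_cases hl : l = j
  · subst hl
    have hkl : (k : ℕ) = l + (k - l) := by omega
    rw [if_pos rfl, if_pos hkl, Matrix.sub_apply A 1 k l, Matrix.one_apply_ne h.ne', sub_zero,
      smul_eq_mul, mul_one, mul_comm]
  · have hkl : (k : ℕ) ≠ l + (k - j) := by have := Fin.val_ne_of_ne hl; omega
    simp [hl, hkl]

noncomputable def GList : List (Fin n) → Matrix (Fin n) (Fin n) ℂ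
  | [] => 0
  | h :: t =>
      (((h :: t).zip t).map fun p => A p.1 p.2).prod •
        (Ck A h *
          shiftL n ^ ((h : ℕ) - (((h :: t).getLast (List.cons_ne_nil _ _)) : ℕ)))

lemma GFun_eq_GList (J : Finset (Fin n)) : GFun A J = GList A (J.sort (· ≥ ·)) := by
  rw [← Finset.reverse_sort_le_eq_sort_ge]
  rfl

lemma GList_cons_cons {a b : Fin n} {t : List (Fin n)}
    (hab : b < a) (hlast : (b :: t).getLast (List.cons_ne_nil _ _) ≤ b) :
    GList A (a :: b :: t) = Ck A a * GList A (b :: t) := by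
  simp only [GList, List.zip_cons_cons, List.map_cons, List.prod_cons,
    List.getLast_cons (List.cons_ne_nil b t)]
  rw [mul_smul_comm, ← mul_assoc, Ck_mul_Ck A hab, smul_mul_assoc, mul_assoc, ← pow_add,
    Nat.sub_add_sub_cancel hab.le hlast, smul_smul, mul_comm]

lemma GFun_empty : GFun A ∅ = 0 := by
  simp [GFun_eq_GList, GList]

lemma GFun_singleton (a : Fin n) :
    GFun A {a} = Ck A a := by
  simp [GFun_eq_GList, GList]

lemma GFun_insert_of_forall_lt {a : Fin n}
    {J : Finset (Fin n)} (hJ : J.Nonempty) (h : ∀ x ∈ J, x < a) :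
    GFun A (insert a J) = Ck A a * GFun A J := by
  obtain ⟨b, t, hbt⟩ := List.exists_cons_of_ne_nil
    (List.ne_nil_of_length_pos (by simpa [Finset.length_sort] using hJ.card_pos) :
      J.sort (· ≥ ·) ≠ [])
  have hsorted : (b :: t).Pairwise (· ≥ ·) := hbt ▸ J.pairwise_sort _
  rw [GFun_eq_GList, GFun_eq_GList, Finset.sort_insert _ (fun x hx => (h x hx).le)
    (fun ha => (h a ha).false), hbt]
  refine GList_cons_cons A (h b ((J.mem_sort _).1 (hbt ▸ List.mem_cons_self))) ?_
  rcases List.mem_cons.1 (List.getLast_mem (List.cons_ne_nil b t)) with hlast | hlast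
  · exact hlast.le
  · exact List.rel_of_pairwise_cons hsorted hlast

lemma sum_powerset_GFun_insert {a : Fin n}
    {s : Finset (Fin n)} (h : ∀ x ∈ s, x < a) :
    ∑ J ∈ s.powerset, GFun A (insert a J) = Ck A a * (1 + ∑ J ∈ s.powerset, GFun A J) := by
  have hempty := Finset.empty_mem_powerset s
  rw [mul_add, mul_one, Finset.mul_sum, ← Finset.add_sum_erase _ _ hempty,
    ← Finset.add_sum_erase _ _ hempty, GFun_empty, mul_zero, zero_add, insert_empty_eq,
    GFun_singleton]
  congr 1
  refine Finset.sum_congr rfl fun J hJ => GFun_insert_of_forall_lt A ?_ ?_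
  · exact Finset.nonempty_iff_ne_empty.2 (Finset.ne_of_mem_erase hJ)
  · exact fun x hx => h x (Finset.mem_powerset.1 (Finset.mem_of_mem_erase hJ) hx)

end

theorem stmt13_general {n : ℕ} (A : Matrix (Fin n) (Fin n) ℂ)
    (K : Finset (Fin n)) :
    ((K.sort (· ≤ ·)).reverse.map (elemFactor A)).prod =
      1 + ∑ J ∈ K.powerset.erase ∅, GFun A J := by
  rw [Finset.sum_erase _ (GFun_empty A), Finset.reverse_sort_le_eq_sort_ge]
  induction K using Finset.induction_on_max with
  | empty => simp [GFun_empty]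
  | insert a s ha ih =>
    have has : a ∉ s := fun h => (ha a h).false
    rw [Finset.sort_insert _ (fun x hx => (ha x hx).le) has, List.map_cons, List.prod_cons, ih,
      Finset.sum_powerset_insert has, sum_powerset_GFun_insert A ha,
      ← add_sub_cancel 1 (elemFactor A a)]
    change (1 + Ck A a) * _ = _
    noncomm_ring

theorem stmt13 {n : ℕ} (A : Matrix (Fin n) (Fin n) ℂ)
    (hlow : ∀ i j : Fin n, i < j → A i j = 0) (K : Finset (Fin n)) :
    ((K.sort (· ≤ ·)).reverse.map (elemFactor A)).prod =
      1 + ∑ J ∈ K.powerset.erase ∅, GFun A J :=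
  stmt13_general A K
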